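/- arXiv:1908.10260 — 6 statements merged into one kernel-verified Lean document; each statement's English description precedes it below -/
import Mathlib

section
/- Let f : ℕ → ℝ satisfy 0 ≤ f(s) ≤ 1 for all s, and define φ(t) = ∏_{s=1}^{t-1} (1 + 1/s - f(s+1)/(2s)). Then there is a constant C > 0 such that φ(t) ≥ C * √t for all t ≥ 1. -/
/-! Since `f ≤ 1`, every factor of `φ` is at least `1 + 1/(2s)`, and
`√(s + 1) ≤ √s · (1 + 1/(2s))` (square both sides), so the product telescopes to
`φ t ≥ √t`; one can take `C = 1`. -/

open Finset

lemma sqrt_add_one_le_sqrt_mul {x : ℝ} (hx : 0 < x) :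
    √(x + 1) ≤ √x * (1 + 1 / (2 * x)) := by
  have hsq : x + 1 ≤ x * (1 + 1 / (2 * x)) ^ 2 := by
    field_simp
    nlinarith
  calc √(x + 1) ≤ √(x * (1 + 1 / (2 * x)) ^ 2) := Real.sqrt_le_sqrt hsq
    _ = √x * (1 + 1 / (2 * x)) := by
      rw [Real.sqrt_mul hx.le, Real.sqrt_sq (by positivity)]

lemma sqrt_succ_le_prod_one_add_inv_two_mul (n : ℕ) :
    √((n : ℝ) + 1) ≤ ∏ s ∈ Icc 1 n, (1 + 1 / (2 * (s : ℝ))) := by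
  induction n with
  | zero => simp
  | succ m ih =>
    rw [prod_Icc_succ_top (Nat.le_add_left 1 m)]
    calc √(((m + 1 : ℕ) : ℝ) + 1)
        ≤ √((m + 1 : ℕ) : ℝ) * (1 + 1 / (2 * ((m + 1 : ℕ) : ℝ))) :=
          sqrt_add_one_le_sqrt_mul (by positivity)
      _ ≤ _ := by
          gcongr
          exact_mod_cast ih

lemma one_add_one_div_two_mul_le {s a : ℝ} (hs : 0 < s) (ha : a ≤ 1) :
    1 + 1 / (2 * s) ≤ 1 + 1 / s - a / (2 * s) := by
  have : a / (2 * s) ≤ 1 / (2 * s) := by gcongr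
  have : 1 / s - 1 / (2 * s) = 1 / (2 * s) := by field_simp; ring
  linarith

theorem stmt_2 (f : ℕ → ℝ) (hf : ∀ s, 0 ≤ f s ∧ f s ≤ 1)
    (φ : ℕ → ℝ)
    (hφ : ∀ t, φ t = ∏ s ∈ Finset.Icc 1 (t - 1),
      (1 + 1 / (s : ℝ) - f (s + 1) / (2 * s))) :
    ∃ C : ℝ, 0 < C ∧ ∀ t : ℕ, 1 ≤ t → C * Real.sqrt t ≤ φ t := by
  refine ⟨1, one_pos, fun t ht => ?_⟩
  obtain ⟨n, rfl⟩ := Nat.exists_eq_add_of_le' ht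
  rw [one_mul, hφ, Nat.add_sub_cancel, Nat.cast_succ]
  refine (sqrt_succ_le_prod_one_add_inv_two_mul n).trans (prod_le_prod (fun s _ => ?_) ?_)
  · positivity
  · intro s hs
    have hs_pos : (0 : ℝ) < s := by exact_mod_cast (mem_Icc.mp hs).1
    exact one_add_one_div_two_mul_le hs_pos (hf _).2
end

section
/- Let f : [1,∞) → (0,1] be non-increasing with f(t) → 0 as t → ∞. Define ξ(s) = ∏_{r=1}^{s-1} (1 - f(r+1)/(2(r+1))). Then ξ is slowly varying at infinity: for every a > 0, ξ(⌊a·s⌋)/ξ(s) → 1 as s → ∞. -/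
/-!
For `s ≤ m` the ratio `ξ m / ξ s` is the product of the factors `1 - x r`, `s ≤ r < m`, where
`x r = f (r + 1) / (2 (r + 1))` is non-increasing. Hence it lies between `1` and
`(1 - x s) ^ (m - s) ≥ 1 - (m - s) x s` (Bernoulli), and when `m ≤ C (s + 1)` the defect
`(m - s) x s ≤ C f (s + 1) / 2` tends to `0`. Both `m = ⌊a s⌋` (for `a ≥ 1`) and `s = ⌊a m⌋`
(for `a < 1`, after inverting the ratio) are of this form.
-/

open Filter Topology Finset

section ProdOneSub

variable {x : ℕ → ℝ}

theorem one_sub_mul_le_prod_Ico_one_sub (hx : Antitone x) (hx1 : ∀ r, x r ≤ 1) {s m : ℕ}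
    (hsm : s ≤ m) :
    1 - ((m : ℝ) - s) * x s ≤ ∏ r ∈ Ico s m, (1 - x r) := by
  have hfactor : ∀ r ∈ Ico s m, 1 - x s ≤ 1 - x r := fun r hr =>
    sub_le_sub_left (hx (mem_Ico.mp hr).1) 1
  calc 1 - ((m : ℝ) - s) * x s = 1 + ((m - s : ℕ) : ℝ) * (-x s) := by
        rw [Nat.cast_sub hsm]; ring
    _ ≤ (1 + -x s) ^ (m - s) := one_add_mul_le_pow (by linarith [hx1 s]) _
    _ = ∏ _r ∈ Ico s m, (1 - x s) := by rw [prod_const, Nat.card_Ico, ← sub_eq_add_neg]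
    _ ≤ ∏ r ∈ Ico s m, (1 - x r) :=
      prod_le_prod (fun _ _ => sub_nonneg.mpr (hx1 s)) hfactor

theorem tendsto_prod_Ico_one_sub (hx : Antitone x) (hx0 : ∀ r, 0 ≤ x r)
    (hx1 : ∀ r, x r ≤ 1) {u v : ℕ → ℕ} (huv : ∀ n, u n ≤ v n)
    (hlim : Tendsto (fun n => ((v n : ℝ) - u n) * x (u n)) atTop (𝓝 0)) :
    Tendsto (fun n => ∏ r ∈ Ico (u n) (v n), (1 - x r)) atTop (𝓝 1) := by
  have hlower : Tendsto (fun n => 1 - ((v n : ℝ) - u n) * x (u n)) atTop (𝓝 1) := by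
    simpa using hlim.const_sub 1
  refine tendsto_of_tendsto_of_tendsto_of_le_of_le hlower tendsto_const_nhds
    (fun n => one_sub_mul_le_prod_Ico_one_sub hx hx1 (huv n)) fun n => ?_
  exact prod_le_one (fun r _ => sub_nonneg.mpr (hx1 r)) fun r _ => sub_le_self _ (hx0 r)

end ProdOneSub

noncomputable def xiWeight (f : ℝ → ℝ) (r : ℕ) : ℝ := f ((r : ℝ) + 1) / (2 * ((r : ℝ) + 1))

noncomputable def xi (f : ℝ → ℝ) (s : ℕ) : ℝ := ∏ r ∈ Ico 1 s, (1 - xiWeight f r)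

section Xi

variable {f : ℝ → ℝ}

theorem xiWeight_pos (hpos : ∀ t : ℝ, 1 ≤ t → 0 < f t) (r : ℕ) : 0 < xiWeight f r :=
  div_pos (hpos _ (by simp)) (by positivity)

theorem xiWeight_le_half (hle : ∀ t : ℝ, 1 ≤ t → f t ≤ 1) (r : ℕ) : xiWeight f r ≤ 1 / 2 := by
  rw [xiWeight, div_le_iff₀ (by positivity)]
  linarith [hle _ (by simp : (1 : ℝ) ≤ r + 1), (r.cast_nonneg : (0 : ℝ) ≤ r)]

theorem antitone_xiWeight (hpos : ∀ t : ℝ, 1 ≤ t → 0 < f t)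
    (hmono : ∀ x y : ℝ, 1 ≤ x → x ≤ y → f y ≤ f x) : Antitone (xiWeight f) := by
  intro r r' hrr'
  have hr : (r : ℝ) ≤ r' := Nat.cast_le.mpr hrr'
  have hone : ∀ n : ℕ, (1 : ℝ) ≤ n + 1 := fun n => by simp
  exact div_le_div₀ (hpos _ (hone r)).le (hmono _ _ (hone r) (by linarith)) (by positivity)
    (by linarith)

theorem tendsto_sub_mul_xiWeight (hf0 : ∀ t : ℝ, 1 ≤ t → 0 ≤ f t)
    (hlim : Tendsto f atTop (𝓝 0)) {u v : ℕ → ℕ} (huv : ∀ n, u n ≤ v n)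
    (hu : Tendsto u atTop atTop) {C : ℝ} (hC : ∀ n, (v n : ℝ) ≤ C * (u n + 1)) :
    Tendsto (fun n => ((v n : ℝ) - u n) * xiWeight f (u n)) atTop (𝓝 0) := by
  have hfu : Tendsto (fun n => f ((u n : ℝ) + 1)) atTop (𝓝 0) :=
    hlim.comp <| tendsto_atTop_add_const_right _ 1 (tendsto_natCast_atTop_atTop.comp hu)
  have hupper : Tendsto (fun n => C / 2 * f ((u n : ℝ) + 1)) atTop (𝓝 0) := by
    simpa using hfu.const_mul (C / 2)
  refine tendsto_of_tendsto_of_tendsto_of_le_of_le tendsto_const_nhds hupper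
    (fun n => ?_) fun n => ?_
  · have huv' : (u n : ℝ) ≤ v n := Nat.cast_le.mpr (huv n)
    exact mul_nonneg (sub_nonneg.mpr huv') (div_nonneg (hf0 _ (by simp)) (by positivity))
  · have hfn := hf0 _ (by simp : (1 : ℝ) ≤ u n + 1)
    have hvn : (v n : ℝ) - u n ≤ C * (u n + 1) := by linarith [hC n, (u n).cast_nonneg (α := ℝ)]
    calc ((v n : ℝ) - u n) * xiWeight f (u n)
        ≤ C * (u n + 1) * (f ((u n : ℝ) + 1) / (2 * ((u n : ℝ) + 1))) := by
          unfold xiWeight; gcongr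
      _ = C / 2 * f ((u n : ℝ) + 1) := by field_simp

theorem xi_div_xi (hle : ∀ t : ℝ, 1 ≤ t → f t ≤ 1) {s m : ℕ} (hs : 1 ≤ s) (hsm : s ≤ m) :
    xi f m / xi f s = ∏ r ∈ Ico s m, (1 - xiWeight f r) := by
  have hxi : xi f s ≠ 0 := prod_ne_zero_iff.mpr fun r _ => by
    linarith [xiWeight_le_half hle r]
  rw [div_eq_iff hxi, xi, xi, mul_comm, prod_Ico_consecutive _ hs hsm]

theorem tendsto_xi_div_xi (hpos : ∀ t : ℝ, 1 ≤ t → 0 < f t ∧ f t ≤ 1)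
    (hmono : ∀ x y : ℝ, 1 ≤ x → x ≤ y → f y ≤ f x) (hlim : Tendsto f atTop (𝓝 0))
    {u v : ℕ → ℕ} (huv : ∀ n, u n ≤ v n) (hu : Tendsto u atTop atTop) {C : ℝ}
    (hC : ∀ n, (v n : ℝ) ≤ C * (u n + 1)) :
    Tendsto (fun n => xi f (v n) / xi f (u n)) atTop (𝓝 1) := by
  have hf : ∀ t : ℝ, 1 ≤ t → 0 < f t := fun t ht => (hpos t ht).1
  have hle : ∀ t : ℝ, 1 ≤ t → f t ≤ 1 := fun t ht => (hpos t ht).2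
  refine (tendsto_prod_Ico_one_sub (antitone_xiWeight hf hmono)
    (fun r => (xiWeight_pos hf r).le) (fun r => (xiWeight_le_half hle r).trans (by norm_num))
    huv (tendsto_sub_mul_xiWeight (fun t ht => (hf t ht).le) hlim huv hu hC)).congr' ?_
  filter_upwards [hu.eventually_ge_atTop 1] with n hn
  exact (xi_div_xi hle hn (huv n)).symm

end Xi

theorem stmt_6 (f : ℝ → ℝ)
    (hpos : ∀ t : ℝ, 1 ≤ t → 0 < f t ∧ f t ≤ 1)
    (hmono : ∀ x y : ℝ, 1 ≤ x → x ≤ y → f y ≤ f x)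
    (hlim : Filter.Tendsto f Filter.atTop (nhds 0))
    (ξ : ℕ → ℝ)
    (hξ : ∀ s, ξ s = ∏ r ∈ Finset.Icc 1 (s - 1),
      (1 - f ((r : ℝ) + 1) / (2 * ((r : ℝ) + 1)))) :
    ∀ a : ℝ, 0 < a →
      Filter.Tendsto (fun s : ℕ => ξ ⌊a * (s : ℝ)⌋₊ / ξ s)
        Filter.atTop (nhds 1) := by
  have hξ_eq : ξ = xi f := funext fun s => by
    rw [hξ, xi, show Icc 1 (s - 1) = Ico 1 s by ext; simp; omega]; rfl
  subst hξ_eq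
  intro a ha
  have hfloor_le : ∀ s : ℕ, (⌊a * s⌋₊ : ℝ) ≤ a * s := fun s => Nat.floor_le (by positivity)
  have hfloor_gt : ∀ s : ℕ, a * s < ⌊a * s⌋₊ + 1 := fun s => Nat.lt_floor_add_one _
  rcases le_or_gt 1 a with h1a | ha1
  · refine tendsto_xi_div_xi hpos hmono hlim (u := fun s => s) (C := a)
      (fun s => Nat.le_floor ?_) tendsto_id fun s => ?_
    · nlinarith [(s.cast_nonneg : (0 : ℝ) ≤ s)]
    · nlinarith [hfloor_le s]
  · have hu : Tendsto (fun s : ℕ => ⌊a * s⌋₊) atTop atTop :=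
      tendsto_nat_floor_atTop.comp (tendsto_natCast_atTop_atTop.const_mul_atTop ha)
    have hinv := (tendsto_xi_div_xi hpos hmono hlim (v := fun s => s) (C := a⁻¹)
      (fun s => Nat.floor_le_of_le (by nlinarith [(s.cast_nonneg : (0 : ℝ) ≤ s)])) hu
      fun s => by rw [inv_mul_eq_div, le_div_iff₀ ha]; linarith [hfloor_gt s])
    simpa using hinv.inv₀ one_ne_zero
end

section
/- Let γ ∈ [0,1) and let f : [1,∞) → (0,1] be non-increasing, regularly varying at infinity with index -γ, with f(t) → 0 when γ = 0. Define F(r) = ∑_{1 ≤ s ≤ r} f(s) and F^{-1}(r) = inf{s : F(s) ≥ r}. Then for all sufficiently large s, s^{1/(1 - γ/2)} ≤ F^{-1}(s). -/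
/-!
Regular variation of index `-γ` makes `f(2t)/f(t) → 2^(-γ)`, so for `β < γ` the function
`f(t) t^β` eventually shrinks by a fixed factor `ρ < 1` at each doubling of `t`; monotonicity
of `f` controls it between doublings, hence `f(t) t^β → 0`, and symmetrically `f(t) t^β → ∞`
for `β > γ`. With `β = γ/2` (or the assumption `f → 0` when `γ = 0`) this gives
`f(k) = o(k^(-γ/2))`, and summing, `F(R) = o(R^(1-γ/2))`; so `F(s^(1/(1-γ/2))) < s` for large
`s`, and since `F` is monotone every `r` with `F(r) ≥ s` exceeds `s^(1/(1-γ/2))`. With `β = 1`,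
`F(n) ≥ n f(n) → ∞` keeps the set defining `F⁻¹(s)` nonempty.
-/

open Filter Topology Asymptotics Set

lemma tendsto_nhds_zero_of_apply_two_mul_le {g : ℝ → ℝ} {ρ T M : ℝ} (hT : 0 < T) (hρ0 : 0 ≤ ρ)
    (hρ1 : ρ < 1) (hg : ∀ t ≥ T, 0 ≤ g t) (hstep : ∀ t ≥ T, g (2 * t) ≤ ρ * g t)
    (hM : ∀ t ∈ Ico T (2 * T), g t ≤ M) : Tendsto g atTop (𝓝 0) := by
  have hM0 : 0 ≤ M := (hg T le_rfl).trans (hM T ⟨le_rfl, by linarith⟩)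
  have hiter : ∀ n : ℕ, ∀ s ≥ T, g (2 ^ n * s) ≤ ρ ^ n * g s := by
    intro n
    induction n with
    | zero => simp
    | succ n ih =>
      intro s hs
      have hle : T ≤ 2 ^ n * s :=
        hs.trans (le_mul_of_one_le_left (hT.le.trans hs) (one_le_pow₀ one_le_two))
      calc g (2 ^ (n + 1) * s) = g (2 * (2 ^ n * s)) := by ring_nf
        _ ≤ ρ * g (2 ^ n * s) := hstep _ hle
        _ ≤ ρ * (ρ ^ n * g s) := mul_le_mul_of_nonneg_left (ih s hs) hρ0
        _ = ρ ^ (n + 1) * g s := by ring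
  have htail : ∀ n : ℕ, ∀ t ≥ 2 ^ n * T, g t ≤ ρ ^ n * M := by
    intro n t ht
    have h1 : 1 ≤ t / T := by
      rw [le_div_iff₀ hT, one_mul]
      exact (le_mul_of_one_le_left hT.le (one_le_pow₀ one_le_two)).trans ht
    obtain ⟨k, hk, hk'⟩ := exists_nat_pow_near h1 one_lt_two
    rw [le_div_iff₀ hT] at hk
    rw [div_lt_iff₀ hT, pow_succ] at hk'
    have hnk : n ≤ k := by
      by_contra! hkn
      have : (2 : ℝ) ^ k * 2 ≤ 2 ^ n := by
        rw [← pow_succ]; exact pow_le_pow_right₀ one_le_two hkn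
      nlinarith
    have hs : t / 2 ^ k ∈ Ico T (2 * T) := by
      constructor
      · rw [le_div_iff₀ (by positivity)]; linarith
      · rw [div_lt_iff₀ (by positivity)]; linarith
    calc g t = g (2 ^ k * (t / 2 ^ k)) := by rw [mul_div_cancel₀ _ (by positivity)]
      _ ≤ ρ ^ k * g (t / 2 ^ k) := hiter k _ hs.1
      _ ≤ ρ ^ k * M := mul_le_mul_of_nonneg_left (hM _ hs) (pow_nonneg hρ0 k)
      _ ≤ ρ ^ n * M := mul_le_mul_of_nonneg_right (pow_le_pow_of_le_one hρ0 hρ1.le hnk) hM0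
  refine tendsto_order.2 ⟨fun a ha => ?_, fun a ha => ?_⟩
  · filter_upwards [eventually_ge_atTop T] with t ht using ha.trans_le (hg t ht)
  · have hlim : Tendsto (fun n : ℕ => ρ ^ n * M) atTop (𝓝 0) := by
      simpa using (tendsto_pow_atTop_nhds_zero_of_lt_one hρ0 hρ1).mul_const M
    obtain ⟨n, hn⟩ := (hlim.eventually_lt_const ha).exists
    filter_upwards [eventually_ge_atTop (2 ^ n * T)] with t ht using (htail n t ht).trans_lt hn

lemma tendsto_nhds_zero_of_tendsto_ratio_two_mul {g : ℝ → ℝ} {L : ℝ} (hL : L < 1)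
    (hg : ∀ᶠ t in atTop, 0 < g t) (hratio : Tendsto (fun t => g (2 * t) / g t) atTop (𝓝 L))
    (hbdd : ∀ᶠ T in atTop, BddAbove (g '' Ico T (2 * T))) : Tendsto g atTop (𝓝 0) := by
  obtain ⟨ρ, hLρ, hρ⟩ := exists_between (max_lt hL zero_lt_one)
  obtain ⟨T₀, hT₀⟩ := eventually_atTop.1
    (hg.and (hratio.eventually_lt_const ((le_max_left L 0).trans_lt hLρ)))
  obtain ⟨T, ⟨M, hM⟩, hT⟩ := (hbdd.and (eventually_ge_atTop (max T₀ 1))).exists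
  refine tendsto_nhds_zero_of_apply_two_mul_le (T := T)
    (by linarith [le_max_right T₀ 1]) ((le_max_right L 0).trans hLρ.le) hρ
    (fun t ht => ?_) (fun t ht => ?_) (fun t ht => hM (mem_image_of_mem g ht))
  · exact (hT₀ t (le_trans (le_max_left _ _) (hT.trans ht))).1.le
  · obtain ⟨hpos, hlt⟩ := hT₀ t (le_trans (le_max_left _ _) (hT.trans ht))
    exact ((div_lt_iff₀ hpos).1 hlt).le

section DoublingRatio

variable {f : ℝ → ℝ} {γ β : ℝ}

lemma tendsto_ratio_mul_rpow (hrv : Tendsto (fun t => f (2 * t) / f t) atTop (𝓝 (2 ^ (-γ))))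
    (β : ℝ) :
    Tendsto (fun t => f (2 * t) * (2 * t) ^ β / (f t * t ^ β)) atTop (𝓝 (2 ^ (β - γ))) := by
  rw [sub_eq_neg_add, Real.rpow_add two_pos]
  refine (hrv.mul_const _).congr' ?_
  filter_upwards [eventually_gt_atTop 0] with t ht
  rw [Real.mul_rpow zero_le_two ht.le]
  field_simp

variable (hf0 : ∀ t, 1 ≤ t → 0 < f t) (hf : AntitoneOn f (Ici 1))
include hf0 hf

lemma mul_rpow_bounds_of_mem_Ico (hβ : 0 ≤ β) {T t : ℝ} (hT : 1 ≤ T) (ht : t ∈ Ico T (2 * T)) :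
    f (2 * T) * T ^ β ≤ f t * t ^ β ∧ f t * t ^ β ≤ f T * (2 * T) ^ β := by
  obtain ⟨hTt, ht2⟩ := ht
  have h1t : 1 ≤ t := hT.trans hTt
  constructor
  · exact mul_le_mul (hf h1t (by simp; linarith) ht2.le) (Real.rpow_le_rpow (by linarith) hTt hβ)
      (by positivity) (hf0 t h1t).le
  · exact mul_le_mul (hf hT h1t hTt) (Real.rpow_le_rpow (by linarith) ht2.le hβ)
      (by positivity) (hf0 T hT).le

lemma tendsto_mul_rpow_nhds_zero (hrv : Tendsto (fun t => f (2 * t) / f t) atTop (𝓝 (2 ^ (-γ))))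
    (hβ : 0 ≤ β) (hβγ : β < γ) : Tendsto (fun t => f t * t ^ β) atTop (𝓝 0) := by
  refine tendsto_nhds_zero_of_tendsto_ratio_two_mul
    (Real.rpow_lt_one_of_one_lt_of_neg one_lt_two (by linarith)) ?_
    (tendsto_ratio_mul_rpow hrv β) ?_
  · filter_upwards [eventually_ge_atTop 1] with t ht
    exact mul_pos (hf0 t ht) (by positivity)
  · filter_upwards [eventually_ge_atTop 1] with T hT
    exact ⟨_, forall_mem_image.2 fun t ht => (mul_rpow_bounds_of_mem_Ico hf0 hf hβ hT ht).2⟩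

lemma tendsto_mul_rpow_atTop (hrv : Tendsto (fun t => f (2 * t) / f t) atTop (𝓝 (2 ^ (-γ))))
    (hβ : 0 ≤ β) (hγβ : γ < β) : Tendsto (fun t => f t * t ^ β) atTop atTop := by
  have hpos : ∀ᶠ t in atTop, 0 < (f t * t ^ β)⁻¹ := by
    filter_upwards [eventually_ge_atTop 1] with t ht
    exact inv_pos.2 (mul_pos (hf0 t ht) (by positivity))
  have hinv : Tendsto (fun t => (f t * t ^ β)⁻¹) atTop (𝓝 0) := by
    refine tendsto_nhds_zero_of_tendsto_ratio_two_mul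
      (inv_lt_one_of_one_lt₀ (Real.one_lt_rpow one_lt_two (sub_pos.2 hγβ))) hpos
      (((tendsto_ratio_mul_rpow hrv β).inv₀ (by positivity)).congr fun t => by
        rw [inv_div, inv_div_inv]) ?_
    filter_upwards [eventually_ge_atTop 1] with T hT
    refine ⟨(f (2 * T) * T ^ β)⁻¹, forall_mem_image.2 fun t ht => ?_⟩
    exact inv_anti₀ (mul_pos (hf0 _ (by linarith)) (by positivity))
      (mul_rpow_bounds_of_mem_Ico hf0 hf hβ hT ht).1
  exact (tendsto_nhdsWithin_iff.2 ⟨hinv, hpos⟩).inv_tendsto_nhdsGT_zero.congr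
    fun t => inv_inv _

end DoublingRatio

lemma mul_rpow_sub_one_le_rpow_sub_rpow {p x : ℝ} (hp0 : 0 ≤ p) (hp1 : p ≤ 1) (hx : 1 ≤ x) :
    p * x ^ (p - 1) ≤ x ^ p - (x - 1) ^ p := by
  have hx0 : 0 < x := by linarith
  have hbern : (1 + -x⁻¹) ^ p ≤ 1 + p * -x⁻¹ :=
    rpow_one_add_le_one_add_mul_self (by linarith [inv_le_one_of_one_le₀ hx]) hp0 hp1
  calc p * x ^ (p - 1) = x ^ p - x ^ p * (1 + p * -x⁻¹) := by
        rw [Real.rpow_sub_one hx0.ne']; ring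
    _ ≤ x ^ p - x ^ p * (1 + -x⁻¹) ^ p := by gcongr
    _ = x ^ p - (x - 1) ^ p := by
        rw [← Real.mul_rpow hx0.le (by linarith [inv_le_one_of_one_le₀ hx]), mul_add,
          mul_neg, mul_inv_cancel₀ hx0.ne', mul_one, ← sub_eq_add_neg]

noncomputable def partialSum (f : ℝ → ℝ) (r : ℝ) : ℝ := ∑ s ∈ Finset.Icc 1 ⌊r⌋₊, f s

section PartialSum

variable {f : ℝ → ℝ}

lemma partialSum_eq_sum_range (r : ℝ) :
    partialSum f r = ∑ i ∈ Finset.range ⌊r⌋₊, f (i + 1) := by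
  rw [partialSum, ← Finset.Ico_add_one_right_eq_Icc, Finset.sum_Ico_eq_sum_range]
  simp [add_comm]

lemma monotone_partialSum (hf0 : ∀ t, 1 ≤ t → 0 ≤ f t) : Monotone (partialSum f) :=
  fun x y hxy => Finset.sum_le_sum_of_subset_of_nonneg
    (Finset.Icc_subset_Icc le_rfl (Nat.floor_mono hxy))
    fun k hk _ => hf0 k (by exact_mod_cast (Finset.mem_Icc.1 hk).1)

lemma natCast_mul_le_partialSum (hf : AntitoneOn f (Ici 1)) (n : ℕ) :
    n * f n ≤ partialSum f n := by
  have h := Finset.card_nsmul_le_sum (Finset.Icc 1 n) (fun k : ℕ => f k) (f n) fun k hk => by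
    obtain ⟨h1k, hkn⟩ := Finset.mem_Icc.1 hk
    exact hf (mem_Ici.2 (by exact_mod_cast h1k)) (mem_Ici.2 (by exact_mod_cast h1k.trans hkn))
      (by exact_mod_cast hkn)
  simpa [partialSum, nsmul_eq_mul] using h

lemma tendsto_partialSum_atTop (hf0 : ∀ t, 1 ≤ t → 0 ≤ f t) (hf : AntitoneOn f (Ici 1))
    (h : Tendsto (fun t => f t * t) atTop atTop) : Tendsto (partialSum f) atTop atTop := by
  refine tendsto_atTop_atTop_of_monotone (monotone_partialSum hf0) fun b => ?_
  obtain ⟨n, hn⟩ := ((h.comp tendsto_natCast_atTop_atTop).eventually_ge_atTop b).exists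
  exact ⟨n, hn.trans ((mul_comm _ _).trans_le (natCast_mul_le_partialSum hf n))⟩

lemma isLittleO_partialSum {β : ℝ} (hβ0 : 0 ≤ β) (hβ1 : β < 1)
    (h : Tendsto (fun t => f t * t ^ β) atTop (𝓝 0)) :
    partialSum f =o[atTop] fun r => r ^ (1 - β) := by
  have hp : 0 < 1 - β := by linarith
  have hf_o : f =o[atTop] fun t => t ^ (-β) := by
    refine (isLittleO_iff_tendsto' ?_).2 (h.congr' ?_)
    all_goals filter_upwards [eventually_gt_atTop 0] with t ht
    · exact fun h0 => absurd h0 (Real.rpow_pos_of_pos ht _).ne'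
    · rw [Real.rpow_neg ht.le, div_inv_eq_mul]
  -- `(k+1)^(-β)` is compared with an increment of `k ↦ k^(1-β)`, so that its sums telescope.
  have hincr : (fun k : ℕ => ((k : ℝ) + 1) ^ (-β)) =O[atTop]
      fun k : ℕ => ((k : ℝ) + 1) ^ (1 - β) - (k : ℝ) ^ (1 - β) := by
    refine IsBigO.of_bound (1 - β)⁻¹ (Eventually.of_forall fun k => ?_)
    have hk := mul_rpow_sub_one_le_rpow_sub_rpow hp.le (by linarith)
      (le_add_of_nonneg_left (Nat.cast_nonneg k) : (1 : ℝ) ≤ k + 1)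
    rw [add_sub_cancel_right, sub_sub_cancel_left] at hk
    have hk0 : 0 ≤ (1 - β) * ((k : ℝ) + 1) ^ (-β) := by positivity
    rw [Real.norm_of_nonneg (by positivity), Real.norm_of_nonneg (by linarith),
      inv_mul_eq_div, le_div_iff₀ hp, mul_comm]
    exact hk
  have hseq := (hf_o.comp_tendsto
    (tendsto_natCast_atTop_atTop.atTop_add tendsto_const_nhds)).trans_isBigO hincr
  have htele : ∀ n : ℕ, ∑ i ∈ Finset.range n, (((i : ℝ) + 1) ^ (1 - β) - (i : ℝ) ^ (1 - β))
      = (n : ℝ) ^ (1 - β) := fun n => by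
    simpa [Real.zero_rpow hp.ne'] using Finset.sum_range_sub (fun i : ℕ => (i : ℝ) ^ (1 - β)) n
  have hsum := (hseq.sum_range
    (fun k => sub_nonneg.2 (Real.rpow_le_rpow (Nat.cast_nonneg k) (by linarith) hp.le))
    (by simpa only [htele, Function.comp_def] using
      (tendsto_rpow_atTop hp).comp tendsto_natCast_atTop_atTop)).congr_right htele
  have hfloor : (fun r : ℝ => (⌊r⌋₊ : ℝ) ^ (1 - β)) =O[atTop] fun r => r ^ (1 - β) := by
    refine IsBigO.of_bound' ?_
    filter_upwards [eventually_ge_atTop 0] with r hr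
    rw [Real.norm_of_nonneg (by positivity), Real.norm_of_nonneg (by positivity)]
    exact Real.rpow_le_rpow (Nat.cast_nonneg _) (Nat.floor_le hr) hp.le
  exact ((hsum.comp_tendsto tendsto_nat_floor_atTop).trans_isBigO hfloor).congr_left
    fun r => (partialSum_eq_sum_range r).symm

lemma eventually_partialSum_lt_rpow {β : ℝ} (hβ0 : 0 ≤ β) (hβ1 : β < 1)
    (h : Tendsto (fun t => f t * t ^ β) atTop (𝓝 0)) :
    ∀ᶠ R in atTop, partialSum f R < R ^ (1 - β) := by
  have hpow_pos : ∀ᶠ R : ℝ in atTop, 0 < ‖R ^ (1 - β)‖ :=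
    (eventually_gt_atTop 0).mono fun R hR => norm_pos_iff.2 (Real.rpow_pos_of_pos hR _).ne'
  filter_upwards [(isLittleO_partialSum hβ0 hβ1 h).eventuallyLT_norm_of_eventually_pos hpow_pos,
    eventually_gt_atTop 0] with R hR hR0
  rw [Real.norm_of_nonneg (Real.rpow_pos_of_pos hR0 _).le] at hR
  exact (Real.le_norm_self _).trans_lt hR

end PartialSum

lemma le_sInf_setOf_le_of_lt {F : ℝ → ℝ} (hF : Monotone F) {x s : ℝ} (hx : F x < s)
    (hs : ∃ y, s ≤ F y) : x ≤ sInf {y | s ≤ F y} :=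
  le_csInf hs fun _ hy => le_of_not_gt fun hyx => (hF hyx.le).not_gt (hx.trans_le hy)

lemma eventually_rpow_one_div_le_sInf {F : ℝ → ℝ} (hF : Monotone F)
    (hunbdd : Tendsto F atTop atTop) {p : ℝ} (hp : 0 < p)
    (hlt : ∀ᶠ R in atTop, F R < R ^ p) : ∀ᶠ s in atTop, s ^ (1 / p) ≤ sInf {y | s ≤ F y} := by
  filter_upwards [(tendsto_rpow_atTop (one_div_pos.2 hp)).eventually hlt, eventually_ge_atTop 0]
    with s hs hs0
  refine le_sInf_setOf_le_of_lt hF ?_ (hunbdd.eventually_ge_atTop s).exists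
  rw [one_div] at hs ⊢
  rwa [Real.rpow_inv_rpow hs0 hp.ne'] at hs

theorem stmt_8 (γ : ℝ) (hγ0 : 0 ≤ γ) (hγ1 : γ < 1) (f : ℝ → ℝ)
    (hpos : ∀ t : ℝ, 1 ≤ t → 0 < f t ∧ f t ≤ 1)
    (hmono : ∀ x y : ℝ, 1 ≤ x → x ≤ y → f y ≤ f x)
    (hrv : ∀ a : ℝ, 0 < a →
      Filter.Tendsto (fun t : ℝ => f (a * t) / f t) Filter.atTop
        (nhds (a ^ (-γ))))
    (hlim : γ = 0 → Filter.Tendsto f Filter.atTop (nhds 0))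
    (F Finv : ℝ → ℝ)
    (hF : ∀ r, F r = ∑ s ∈ Finset.Icc 1 ⌊r⌋₊, f s)
    (hFinv : ∀ r, Finv r = sInf {s : ℝ | r ≤ F s}) :
    ∀ᶠ s : ℝ in Filter.atTop, s ^ (1 / (1 - γ / 2)) ≤ Finv s := by
  obtain rfl : F = partialSum f := funext hF
  obtain rfl : Finv = fun r => sInf {s | r ≤ partialSum f s} := funext hFinv
  have hf0 : ∀ t, 1 ≤ t → 0 < f t := fun t ht => (hpos t ht).1
  have hf : AntitoneOn f (Ici 1) := fun x hx y _ hxy => hmono x y hx hxy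
  have hsmall : Tendsto (fun t => f t * t ^ (γ / 2)) atTop (𝓝 0) := by
    rcases hγ0.eq_or_lt with rfl | hγ
    · simpa using hlim rfl
    · exact tendsto_mul_rpow_nhds_zero hf0 hf (hrv 2 two_pos) (by positivity) (by linarith)
  have hunbdd : Tendsto (partialSum f) atTop atTop :=
    tendsto_partialSum_atTop (fun t ht => (hf0 t ht).le) hf
      (by simpa using tendsto_mul_rpow_atTop hf0 hf (hrv 2 two_pos) zero_le_one hγ1)
  exact eventually_rpow_one_div_le_sInf (monotone_partialSum fun t ht => (hf0 t ht).le) hunbdd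
    (by linarith) (eventually_partialSum_lt_rpow (by positivity) (by linarith) hsmall)
end

section
/- Let γ ∈ [0,1) and let f be regularly varying at infinity with index -γ, non-increasing, with values in (0,1], and define φ(t) = ∏_{s=1}^{t-1} (1 + 1/s - f(s+1)/(2s)) and F^{-1} as the generalized inverse of the partial-sum function F of f. Then there is a constant C > 0, uniform in i, such that φ(F^{-1}(i)/2) / φ(F^{-1}(i)) ≥ C for all i ≥ 1. -/
/-!
Each factor `1 + 1/s - f(s+1)/(2s)` lies in `(0, 1 + 1/s]`, and `∏_{s=m}^{n-1} (1 + 1/s) = n/m`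
telescopes, so `φ n ≤ (n/m) φ m`. With `m = ⌊x/2⌋` and `n = ⌊x⌋` we have `n ≤ 2m + 1 ≤ 3m`,
hence the ratio is at least `1/3` (when `m = 0`, both products are empty).
-/

open Finset

theorem Nat.Icc_one_sub_one_eq_Ico (t : ℕ) : Icc 1 (t - 1) = Ico 1 t := by
  ext s
  simp only [mem_Icc, mem_Ico]
  omega

theorem Nat.floor_half_le_floor (x : ℝ) : ⌊x / 2⌋₊ ≤ ⌊x⌋₊ := by
  rcases le_or_gt x 0 with hx | hx
  · simp [Nat.floor_of_nonpos (by linarith : x / 2 ≤ 0)]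
  · exact Nat.floor_le_floor (by linarith)

theorem Nat.floor_le_two_mul_floor_half_add_one (x : ℝ) : ⌊x⌋₊ ≤ 2 * ⌊x / 2⌋₊ + 1 := by
  rcases le_or_gt x 0 with hx | hx
  · simp [Nat.floor_of_nonpos hx]
  · have hhalf : x / 2 < ⌊x / 2⌋₊ + 1 := Nat.lt_floor_add_one _
    have hlt : (⌊x⌋₊ : ℝ) < 2 * ⌊x / 2⌋₊ + 2 := by linarith [Nat.floor_le hx.le]
    exact Nat.le_of_lt_succ (by exact_mod_cast hlt)

theorem prod_Ico_one_add_inv {m n : ℕ} (hm : 0 < m) (hmn : m ≤ n) :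
    ∏ s ∈ Ico m n, (1 + 1 / (s : ℝ)) = n / m := by
  induction n, hmn using Nat.le_induction with
  | base => simp [(Nat.cast_pos.mpr hm).ne']
  | succ n hmn ih =>
    have hn : (0 : ℝ) < n := by exact_mod_cast hm.trans_le hmn
    rw [prod_Ico_succ_top hmn, ih]
    push_cast
    field_simp

section PartialProducts

variable {c : ℕ → ℝ}

theorem prod_Ico_le_div (hc : ∀ s, 1 ≤ s → 0 ≤ c s ∧ c s ≤ 1 + 1 / (s : ℝ)) {m n : ℕ}
    (hm : 0 < m) (hmn : m ≤ n) : ∏ s ∈ Ico m n, c s ≤ n / m := by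
  rw [← prod_Ico_one_add_inv hm hmn]
  refine prod_le_prod (fun s hs => (hc s ?_).1) (fun s hs => (hc s ?_).2) <;>
    linarith [(mem_Ico.mp hs).1]

theorem prod_Ico_one_le_three_mul (hc : ∀ s, 1 ≤ s → 0 ≤ c s ∧ c s ≤ 1 + 1 / (s : ℝ))
    {m n : ℕ} (hmn : m ≤ n) (hn : n ≤ 2 * m + 1) :
    ∏ s ∈ Ico 1 n, c s ≤ 3 * ∏ s ∈ Ico 1 m, c s := by
  rcases Nat.eq_zero_or_pos m with rfl | hm
  · rw [Ico_eq_empty_of_le hn, Ico_eq_empty_of_le zero_le_one]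
    norm_num
  have hprod_m : 0 ≤ ∏ s ∈ Ico 1 m, c s :=
    prod_nonneg fun s hs => (hc s (mem_Ico.mp hs).1).1
  have hratio : (n : ℝ) / m ≤ 3 := by
    rw [div_le_iff₀ (by exact_mod_cast hm)]
    have : (n : ℝ) ≤ 2 * m + 1 := by exact_mod_cast hn
    linarith [(Nat.one_le_cast.mpr hm : (1 : ℝ) ≤ m)]
  calc ∏ s ∈ Ico 1 n, c s = (∏ s ∈ Ico 1 m, c s) * ∏ s ∈ Ico m n, c s :=
        (prod_Ico_consecutive c hm hmn).symm
    _ ≤ (∏ s ∈ Ico 1 m, c s) * 3 :=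
        mul_le_mul_of_nonneg_left ((prod_Ico_le_div hc hm hmn).trans hratio) hprod_m
    _ = 3 * ∏ s ∈ Ico 1 m, c s := mul_comm _ _

end PartialProducts

theorem one_add_inv_sub_div_mem_Ioc {s y : ℝ} (hs : 0 < s) (hy0 : 0 ≤ y) (hy2 : y ≤ 2) :
    1 + 1 / s - y / (2 * s) ∈ Set.Ioc 0 (1 + 1 / s) := by
  have hy : y / (2 * s) ≤ 1 / s := by
    rw [div_le_div_iff₀ (by positivity) hs]
    nlinarith
  exact ⟨by linarith, by linarith [div_nonneg hy0 (by positivity : (0 : ℝ) ≤ 2 * s)]⟩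

theorem stmt_10_general (f : ℝ → ℝ)
    (hpos : ∀ t : ℝ, 1 ≤ t → 0 < f t ∧ f t ≤ 1)
    (φ : ℕ → ℝ)
    (hφ : ∀ t, φ t = ∏ s ∈ Finset.Icc 1 (t - 1),
      (1 + 1 / (s : ℝ) - f ((s : ℝ) + 1) / (2 * s)))
    (Finv : ℝ → ℝ) :
    ∃ C : ℝ, 0 < C ∧ ∀ i : ℕ, 1 ≤ i →
      C ≤ φ ⌊Finv i / 2⌋₊ / φ ⌊Finv i⌋₊ := by
  set c : ℕ → ℝ := fun s => 1 + 1 / (s : ℝ) - f ((s : ℝ) + 1) / (2 * s)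
  have hc : ∀ s, 1 ≤ s → 0 < c s ∧ c s ≤ 1 + 1 / (s : ℝ) := fun s hs => by
    have hs' : (1 : ℝ) ≤ s := by exact_mod_cast hs
    have hf := hpos ((s : ℝ) + 1) (by linarith)
    exact one_add_inv_sub_div_mem_Ioc (by linarith) hf.1.le (by linarith [hf.2])
  have hφ' : ∀ t, φ t = ∏ s ∈ Ico 1 t, c s := fun t => by
    rw [hφ, Nat.Icc_one_sub_one_eq_Ico]
  refine ⟨1 / 3, by norm_num, fun i _ => ?_⟩
  have hφ_pos : 0 < φ ⌊Finv i⌋₊ := by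
    rw [hφ']
    exact prod_pos fun s hs => (hc s (mem_Ico.mp hs).1).1
  have hφ_le : φ ⌊Finv i⌋₊ ≤ 3 * φ ⌊Finv i / 2⌋₊ := by
    simpa only [hφ'] using prod_Ico_one_le_three_mul (fun s hs => ⟨(hc s hs).1.le, (hc s hs).2⟩)
      (Nat.floor_half_le_floor _) (Nat.floor_le_two_mul_floor_half_add_one _)
  rw [le_div_iff₀ hφ_pos]
  linarith

theorem stmt_10 (γ : ℝ) (hγ0 : 0 ≤ γ) (hγ1 : γ < 1) (f : ℝ → ℝ)
    (hpos : ∀ t : ℝ, 1 ≤ t → 0 < f t ∧ f t ≤ 1)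
    (hmono : ∀ x y : ℝ, 1 ≤ x → x ≤ y → f y ≤ f x)
    (hlim : Filter.Tendsto f Filter.atTop (nhds 0))
    (hrv : ∀ a : ℝ, 0 < a →
      Filter.Tendsto (fun t : ℝ => f (a * t) / f t) Filter.atTop
        (nhds (a ^ (-γ))))
    (φ : ℕ → ℝ)
    (hφ : ∀ t, φ t = ∏ s ∈ Finset.Icc 1 (t - 1),
      (1 + 1 / (s : ℝ) - f ((s : ℝ) + 1) / (2 * s)))
    (F Finv : ℝ → ℝ)
    (hF : ∀ r, F r = ∑ s ∈ Finset.Icc 1 ⌊r⌋₊, f s)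
    (hFinv : ∀ r, Finv r = sInf {s : ℝ | r ≤ F s}) :
    ∃ C : ℝ, 0 < C ∧ ∀ i : ℕ, 1 ≤ i →
      C ≤ φ ⌊Finv i / 2⌋₊ / φ ⌊Finv i⌋₊ :=
  stmt_10_general f hpos φ hφ Finv
end

section
/- Let k ≥ 1 and let f : ℕ → [0,1]. Define φ(t) = ∏_{s=1}^{t-1}(1 + (1 - f(s+1)/2)/s) and φ_k(t) = ∏_{s=1}^{t-1}(1 + (k/s)(1 - f(s+1)/2) + (k(k-1)/(4s²))(1 - f(s+1))). Then there exists a constant C > 0 depending only on k (and f) such that C^{-1} φ(t)^k ≤ φ_k(t) ≤ C φ(t)^k for all t ≥ 1. -/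
/-!
Write the `s`-th factor of `φ` as `1 + x` with `x = (1 - f(s+1)/2)/s ∈ [0, 1/s]`. The `s`-th factor
of `φ_k` is `1 + k x + c/s²` with `0 ≤ c ≤ 4^k`, while `(1 + x)^k` lies between `1 + k x` and
`1 + k x + 4^k x²`. So each factor of `φ_k` and the matching factor of `φ^k` agree up to a factor
`1 + 4^k/s²`, and the product of these corrections is bounded by `exp (4^k ∑ 1/s²) ≤ exp (2·4^k)`.
-/

open Finset

lemma one_add_pow_le_one_add_mul_add_four_pow_mul_sq (k : ℕ) {x : ℝ} (hx0 : 0 ≤ x) (hx1 : x ≤ 1) :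
    (1 + x) ^ k ≤ 1 + k * x + 4 ^ k * x ^ 2 := by
  induction k with
  | zero => simp [sq_nonneg]
  | succ k ih =>
    have hk : (k : ℝ) ≤ 4 ^ k := by
      calc (k : ℝ) ≤ 2 ^ k := by exact_mod_cast k.lt_two_pow_self.le
        _ ≤ 4 ^ k := by gcongr; norm_num
    have hx3 : x ^ 3 ≤ x ^ 2 := by nlinarith
    calc (1 + x) ^ (k + 1) = (1 + x) ^ k * (1 + x) := pow_succ _ _
      _ ≤ (1 + k * x + 4 ^ k * x ^ 2) * (1 + x) := by gcongr
      _ ≤ 1 + (k + 1 : ℕ) * x + 4 ^ (k + 1) * x ^ 2 := by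
        push_cast; ring_nf; nlinarith [pow_pos (by norm_num : (0 : ℝ) < 4) k]

lemma one_add_mul_add_mul_le_one_add_pow_mul (k : ℕ) {x c q M : ℝ} (hx : 0 ≤ x) (hq : 0 ≤ q)
    (hM : 0 ≤ M) (hcM : c ≤ M) :
    1 + k * x + c * q ≤ (1 + x) ^ k * (1 + M * q) := by
  have hbern : 1 + k * x ≤ (1 + x) ^ k := one_add_mul_le_pow (by linarith) k
  have hone : 1 ≤ (1 + x) ^ k := one_le_pow₀ (by linarith)
  have hMq : 0 ≤ M * q := mul_nonneg hM hq
  nlinarith [mul_le_mul_of_nonneg_right hcM hq]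

lemma one_add_pow_le_one_add_mul_add_mul_mul (k : ℕ) {x c q : ℝ} (hx0 : 0 ≤ x) (hx1 : x ≤ 1)
    (hxq : x ^ 2 ≤ q) (hc : 0 ≤ c) :
    (1 + x) ^ k ≤ (1 + k * x + c * q) * (1 + 4 ^ k * q) := by
  have hq : 0 ≤ q := (sq_nonneg x).trans hxq
  have h4 : (0 : ℝ) ≤ 4 ^ k := by positivity
  have hT : 0 ≤ k * x + c * q := by positivity
  calc (1 + x) ^ k ≤ 1 + k * x + 4 ^ k * x ^ 2 :=
        one_add_pow_le_one_add_mul_add_four_pow_mul_sq k hx0 hx1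
    _ ≤ 1 + k * x + 4 ^ k * q := by gcongr
    _ ≤ (1 + k * x + c * q) * (1 + 4 ^ k * q) := by nlinarith [mul_nonneg hT (mul_nonneg h4 hq)]

lemma prod_le_mul_prod_of_le_mul {ι : Type*} (s : Finset ι) {x y g : ι → ℝ} {C : ℝ}
    (hx : ∀ i ∈ s, 0 ≤ x i) (hy : ∀ i ∈ s, 0 ≤ y i) (hxy : ∀ i ∈ s, x i ≤ y i * g i)
    (hC : ∏ i ∈ s, g i ≤ C) :
    ∏ i ∈ s, x i ≤ C * ∏ i ∈ s, y i :=
  calc ∏ i ∈ s, x i ≤ ∏ i ∈ s, (y i * g i) := prod_le_prod hx hxy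
    _ = (∏ i ∈ s, y i) * ∏ i ∈ s, g i := prod_mul_distrib
    _ ≤ C * ∏ i ∈ s, y i := by
      rw [mul_comm C]; exact mul_le_mul_of_nonneg_left hC (prod_nonneg hy)

lemma prod_Icc_one_add_div_sq_le_exp {M : ℝ} (hM : 0 ≤ M) (n : ℕ) :
    ∏ s ∈ Icc 1 n, (1 + M / (s : ℝ) ^ 2) ≤ Real.exp (2 * M) := by
  have hsum : ∑ s ∈ Icc 1 n, ((s : ℝ) ^ 2)⁻¹ ≤ 2 := by
    have hIoo : Icc 1 n = Ioo 0 (n + 1) := by ext; simp only [mem_Icc, mem_Ioo]; omega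
    simpa [hIoo] using sum_Ioo_inv_sq_le (α := ℝ) 0 (n + 1)
  calc ∏ s ∈ Icc 1 n, (1 + M / (s : ℝ) ^ 2)
      ≤ Real.exp (∑ s ∈ Icc 1 n, M / (s : ℝ) ^ 2) :=
        Real.prod_one_add_le_exp_sum _ fun s ↦ by positivity
    _ ≤ Real.exp (2 * M) := by
      simp_rw [Real.exp_le_exp, div_eq_mul_inv, ← mul_sum]
      linarith [mul_le_mul_of_nonneg_left hsum hM]

/-- The `s`-th factor of `φ`, with `u = f (s + 1)`. -/
noncomputable def phiFactor (u s : ℝ) : ℝ := 1 + (1 - u / 2) / s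

/-- The `s`-th factor of `φ_k`, with `u = f (s + 1)`. -/
noncomputable def phikFactor (k : ℕ) (u s : ℝ) : ℝ :=
  1 + ((k : ℝ) / s) * (1 - u / 2) + ((k : ℝ) * (k - 1) / (4 * s ^ 2)) * (1 - u)

lemma phikFactor_eq (k : ℕ) (u s : ℝ) :
    phikFactor k u s = 1 + k * ((1 - u / 2) / s) + (k * (k - 1) / 4 * (1 - u)) * (1 / s ^ 2) := by
  unfold phikFactor; ring

lemma phiFactor_nonneg {u s : ℝ} (hu : u ≤ 1) (hs : 0 < s) : 0 ≤ phiFactor u s := by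
  unfold phiFactor
  have : 0 ≤ (1 - u / 2) / s := div_nonneg (by linarith) hs.le
  linarith

lemma cast_mul_cast_sub_one_nonneg (k : ℕ) : (0 : ℝ) ≤ k * (k - 1) := by
  rcases k.eq_zero_or_pos with rfl | hk
  · simp
  · have : (1 : ℝ) ≤ k := by exact_mod_cast hk
    nlinarith

lemma phikFactor_nonneg (k : ℕ) {u s : ℝ} (hu : u ≤ 1) (hs : 0 < s) : 0 ≤ phikFactor k u s := by
  have hx : 0 ≤ (1 - u / 2) / s := div_nonneg (by linarith) hs.le
  have hc : 0 ≤ (k * (k - 1) / 4 * (1 - u)) * (1 / s ^ 2) :=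
    mul_nonneg (mul_nonneg (div_nonneg (cast_mul_cast_sub_one_nonneg k) (by norm_num))
      (by linarith)) (by positivity)
  rw [phikFactor_eq]
  positivity

lemma phikFactor_le (k : ℕ) {u s : ℝ} (hu0 : 0 ≤ u) (hu1 : u ≤ 1) (hs : 0 < s) :
    phikFactor k u s ≤ phiFactor u s ^ k * (1 + 4 ^ k / s ^ 2) := by
  have hc : (k : ℝ) * (k - 1) / 4 * (1 - u) ≤ 4 ^ k := by
    have h2k : (k : ℝ) ≤ 2 ^ k := by exact_mod_cast k.lt_two_pow_self.le
    have h4k : (4 : ℝ) ^ k = (2 ^ k) ^ 2 := by rw [← pow_mul, mul_comm, pow_mul]; norm_num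
    have : (0 : ℝ) ≤ k := k.cast_nonneg
    nlinarith [mul_le_mul h2k h2k this (by positivity)]
  rw [phikFactor_eq, div_eq_mul_one_div (4 ^ k : ℝ)]
  exact one_add_mul_add_mul_le_one_add_pow_mul k (div_nonneg (by linarith) hs.le) (by positivity)
    (by positivity) hc

lemma phiFactor_pow_le (k : ℕ) {u s : ℝ} (hu0 : 0 ≤ u) (hu1 : u ≤ 1) (hs : 1 ≤ s) :
    phiFactor u s ^ k ≤ phikFactor k u s * (1 + 4 ^ k / s ^ 2) := by
  have hs0 : 0 < s := by linarith
  have hx1 : (1 - u / 2) / s ≤ 1 := by rw [div_le_one hs0]; linarith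
  have hxq : ((1 - u / 2) / s) ^ 2 ≤ 1 / s ^ 2 := by
    rw [div_pow]; gcongr; nlinarith
  have hc : 0 ≤ (k : ℝ) * (k - 1) / 4 * (1 - u) :=
    mul_nonneg (div_nonneg (cast_mul_cast_sub_one_nonneg k) (by norm_num)) (by linarith)
  rw [phikFactor_eq, div_eq_mul_one_div (4 ^ k : ℝ)]
  exact one_add_pow_le_one_add_mul_add_mul_mul k (div_nonneg (by linarith) hs0.le) hx1 hxq hc

theorem stmt_12_general (k : ℕ) (f : ℕ → ℝ)
    (hf : ∀ s, 0 ≤ f s ∧ f s ≤ 1)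
    (φ φk : ℕ → ℝ)
    (hφ : ∀ t, φ t = ∏ s ∈ Finset.Icc 1 (t - 1),
      (1 + (1 - f (s + 1) / 2) / (s : ℝ)))
    (hφk : ∀ t, φk t = ∏ s ∈ Finset.Icc 1 (t - 1),
      (1 + ((k : ℝ) / s) * (1 - f (s + 1) / 2)
        + ((k : ℝ) * (k - 1) / (4 * (s : ℝ) ^ 2)) * (1 - f (s + 1)))) :
    ∃ C : ℝ, 0 < C ∧ ∀ t : ℕ, 1 ≤ t →
      C⁻¹ * (φ t) ^ k ≤ φk t ∧ φk t ≤ C * (φ t) ^ k := by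
  refine ⟨Real.exp (2 * 4 ^ k), Real.exp_pos _, fun t _ ↦ ?_⟩
  have hφt : φ t ^ k = ∏ s ∈ Icc 1 (t - 1), phiFactor (f (s + 1)) s ^ k := by
    rw [hφ, prod_pow]; rfl
  have hφkt : φk t = ∏ s ∈ Icc 1 (t - 1), phikFactor k (f (s + 1)) s := hφk t
  have hcorr := prod_Icc_one_add_div_sq_le_exp (M := 4 ^ k) (by positivity) (t - 1)
  have hs : ∀ s ∈ Icc 1 (t - 1), (1 : ℝ) ≤ s := fun s hs ↦ by exact_mod_cast (mem_Icc.1 hs).1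
  have hφ_nonneg : ∀ s ∈ Icc 1 (t - 1), 0 ≤ phiFactor (f (s + 1)) s ^ k := fun s hs' ↦
    pow_nonneg (phiFactor_nonneg (hf _).2 (zero_lt_one.trans_le (hs s hs'))) k
  have hφk_nonneg : ∀ s ∈ Icc 1 (t - 1), 0 ≤ phikFactor k (f (s + 1)) s := fun s hs' ↦
    phikFactor_nonneg k (hf _).2 (zero_lt_one.trans_le (hs s hs'))
  rw [hφt, hφkt, inv_mul_le_iff₀ (Real.exp_pos _)]
  exact ⟨prod_le_mul_prod_of_le_mul _ hφ_nonneg hφk_nonneg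
      (fun s hs' ↦ phiFactor_pow_le k (hf _).1 (hf _).2 (hs s hs')) hcorr,
    prod_le_mul_prod_of_le_mul _ hφk_nonneg hφ_nonneg
      (fun s hs' ↦ phikFactor_le k (hf _).1 (hf _).2 (zero_lt_one.trans_le (hs s hs'))) hcorr⟩

theorem stmt_12 (k : ℕ) (hk : 1 ≤ k) (f : ℕ → ℝ)
    (hf : ∀ s, 0 ≤ f s ∧ f s ≤ 1)
    (φ φk : ℕ → ℝ)
    (hφ : ∀ t, φ t = ∏ s ∈ Finset.Icc 1 (t - 1),
      (1 + (1 - f (s + 1) / 2) / (s : ℝ)))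
    (hφk : ∀ t, φk t = ∏ s ∈ Finset.Icc 1 (t - 1),
      (1 + ((k : ℝ) / s) * (1 - f (s + 1) / 2)
        + ((k : ℝ) * (k - 1) / (4 * (s : ℝ) ^ 2)) * (1 - f (s + 1)))) :
    ∃ C : ℝ, 0 < C ∧ ∀ t : ℕ, 1 ≤ t →
      C⁻¹ * (φ t) ^ k ≤ φk t ∧ φk t ≤ C * (φ t) ^ k :=
  stmt_12_general k f hf φ φk hφ hφk
end

section
/- Let γ ∈ [0,1) and let f be non-increasing, regularly varying at infinity with index -γ, with f(t) → 0 as t → ∞, and suppose ∑_{s≥1} f(s)/s < ∞. Then f(t)·log t → 0 as t → ∞. -/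
/-!
For `m ≤ n`, the harmonic-type sum `∑_{m ≤ s < n} 1/(s+1)` dominates `log (n+1) - log (m+1)`, and
`f` is non-increasing, so `f n · log ((n+1)/(m+1)) ≤ ∑_{m ≤ s < n} f (s+1)/(s+1)`, a tail of the
convergent series. Hence `f n · log (n+1)` is at most a small tail plus `f n · log (m+1)`, and the
latter tends to `0` with `f`. Monotonicity passes from integers to real `t` via `⌊t⌋`.
-/

open Filter Finset Real Topology

lemma Real.log_add_one_sub_log_le {x : ℝ} (hx : 0 < x) : log (x + 1) - log x ≤ x⁻¹ := by
  rw [← log_div (by positivity) hx.ne']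
  calc log ((x + 1) / x) ≤ (x + 1) / x - 1 := log_le_sub_one_of_pos (by positivity)
    _ = x⁻¹ := by field_simp; ring

lemma sum_Ico_log_add_one_sub_log {m n : ℕ} (hmn : m ≤ n) :
    ∑ s ∈ Ico m n, (log ((s : ℝ) + 1 + 1) - log ((s : ℝ) + 1)) =
      log ((n : ℝ) + 1) - log ((m : ℝ) + 1) := by
  simpa using Finset.sum_Ico_sub (fun s : ℕ => log ((s : ℝ) + 1)) hmn

lemma mul_log_sub_log_le_sum_Ico {f : ℝ → ℝ} (hanti : AntitoneOn f (Set.Ici 1))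
    (hnonneg : ∀ t, 1 ≤ t → 0 ≤ f t) {m n : ℕ} (hmn : m ≤ n) :
    f n * (log ((n : ℝ) + 1) - log ((m : ℝ) + 1)) ≤
      ∑ s ∈ Ico m n, f ((s : ℝ) + 1) / ((s : ℝ) + 1) := by
  rw [← sum_Ico_log_add_one_sub_log hmn, mul_sum]
  refine sum_le_sum fun s hs => ?_
  have hsn : (s : ℝ) + 1 ≤ n := by exact_mod_cast (mem_Ico.1 hs).2
  have hs1 : (1 : ℝ) ≤ (s : ℝ) + 1 := by simp
  calc f n * (log ((s : ℝ) + 1 + 1) - log ((s : ℝ) + 1))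
      ≤ f n * ((s : ℝ) + 1)⁻¹ :=
        mul_le_mul_of_nonneg_left (log_add_one_sub_log_le (by positivity))
          (hnonneg _ (hs1.trans hsn))
    _ ≤ f ((s : ℝ) + 1) * ((s : ℝ) + 1)⁻¹ :=
        mul_le_mul_of_nonneg_right (hanti hs1 (hs1.trans hsn) hsn) (by positivity)
    _ = f ((s : ℝ) + 1) / ((s : ℝ) + 1) := (div_eq_mul_inv _ _).symm

lemma sum_Ico_le_tsum_nat_add {g : ℕ → ℝ} (hg : ∀ s, 0 ≤ g s) (hsum : Summable g) (m n : ℕ) :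
    ∑ s ∈ Ico m n, g s ≤ ∑' k, g (k + m) := by
  rw [sum_Ico_eq_sum_range]
  simp_rw [add_comm m]
  exact ((summable_nat_add_iff m).2 hsum).sum_le_tsum _ fun k _ => hg _

lemma tendsto_apply_natCast_mul_log {f : ℝ → ℝ} (hanti : AntitoneOn f (Set.Ici 1))
    (hnonneg : ∀ t, 1 ≤ t → 0 ≤ f t) (hlim : Tendsto f atTop (𝓝 0))
    (hsum : Summable fun s : ℕ => f (s + 1) / (s + 1)) :
    Tendsto (fun n : ℕ => f n * log (n + 1)) atTop (𝓝 0) := by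
  set g : ℕ → ℝ := fun s => f (s + 1) / (s + 1)
  have hg : ∀ s, 0 ≤ g s := fun s => div_nonneg (hnonneg _ (by simp)) (by positivity)
  refine tendsto_order.2 ⟨fun ε hε => ?_, fun ε hε => ?_⟩
  · filter_upwards [eventually_ge_atTop 1] with n hn
    exact hε.trans_le (mul_nonneg (hnonneg _ (by exact_mod_cast hn)) (log_nonneg (by simp)))
  obtain ⟨m, hm⟩ : ∃ m, ∑' k, g (k + m) < ε / 2 :=
    ((tendsto_sum_nat_add g).eventually (gt_mem_nhds (half_pos hε))).exists
  have hfn : ∀ᶠ n : ℕ in atTop, f n * log ((m : ℝ) + 1) < ε / 2 := by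
    have := (hlim.comp tendsto_natCast_atTop_atTop).mul_const (log ((m : ℝ) + 1))
    rw [zero_mul] at this
    exact this.eventually (gt_mem_nhds (half_pos hε))
  filter_upwards [hfn, eventually_ge_atTop m] with n hn hmn
  calc f n * log ((n : ℝ) + 1)
      = f n * (log ((n : ℝ) + 1) - log ((m : ℝ) + 1)) + f n * log ((m : ℝ) + 1) := by ring
    _ ≤ ∑' k, g (k + m) + f n * log ((m : ℝ) + 1) := by
      gcongr
      exact (mul_log_sub_log_le_sum_Ico hanti hnonneg hmn).trans
        (sum_Ico_le_tsum_nat_add hg hsum m n)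
    _ < ε := by linarith

theorem stmt_14_general (f : ℝ → ℝ)
    (hpos : ∀ t : ℝ, 1 ≤ t → 0 < f t ∧ f t ≤ 1)
    (hmono : ∀ x y : ℝ, 1 ≤ x → x ≤ y → f y ≤ f x)
    (hlim : Filter.Tendsto f Filter.atTop (nhds 0))
    (hS : Summable (fun s : ℕ => f (s + 1) / (s + 1))) :
    Filter.Tendsto (fun t : ℝ => f t * Real.log t) Filter.atTop (nhds 0) := by
  have hanti : AntitoneOn f (Set.Ici 1) := fun x hx y _ hxy => hmono x y hx hxy
  have hnonneg : ∀ t, 1 ≤ t → 0 ≤ f t := fun t ht => (hpos t ht).1.le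
  have hfloor := (tendsto_apply_natCast_mul_log hanti hnonneg hlim hS).comp (tendsto_nat_floor_atTop (α := ℝ))
  refine tendsto_of_tendsto_of_tendsto_of_le_of_le' tendsto_const_nhds hfloor ?_ ?_
  · filter_upwards [eventually_ge_atTop 1] with t ht
    exact mul_nonneg (hnonneg t ht) (log_nonneg ht)
  · filter_upwards [eventually_ge_atTop 1] with t ht
    have hn : (1 : ℝ) ≤ ⌊t⌋₊ := by exact_mod_cast Nat.one_le_floor_iff t |>.2 ht
    exact mul_le_mul (hanti hn ht (Nat.floor_le (by linarith)))
      (log_le_log (by linarith) (Nat.lt_floor_add_one t).le) (log_nonneg ht) (hnonneg _ hn)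

theorem stmt_14 (γ : ℝ) (hγ0 : 0 ≤ γ) (hγ1 : γ < 1) (f : ℝ → ℝ)
    (hpos : ∀ t : ℝ, 1 ≤ t → 0 < f t ∧ f t ≤ 1)
    (hmono : ∀ x y : ℝ, 1 ≤ x → x ≤ y → f y ≤ f x)
    (hlim : Filter.Tendsto f Filter.atTop (nhds 0))
    (hrv : ∀ a : ℝ, 0 < a →
      Filter.Tendsto (fun t : ℝ => f (a * t) / f t) Filter.atTop
        (nhds (a ^ (-γ))))
    (hS : Summable (fun s : ℕ => f (s + 1) / (s + 1))) :
    Filter.Tendsto (fun t : ℝ => f t * Real.log t) Filter.atTop (nhds 0) :=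
  stmt_14_general f hpos hmono hlim hS
end
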